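/- arXiv:1403.0159 — 3 statements merged into one kernel-verified Lean document; each statement's English description precedes it below -/
import Mathlib

section
/- For positive integers i ≠ j with 𝐢 = i/gcd(i,j) and 𝐣 = j/gcd(i,j), we have (4/π²)·(2 + Σ_{m=2,4,...} 4/((m²𝐢²-1)(m²𝐣²-1))) = (8/π²)·(𝐢²/(𝐢²-𝐣²)·(π/(2𝐢))·cot(π/(2𝐢)) - 𝐣²/(𝐢²-𝐣²)·(π/(2𝐣))·cot(π/(2𝐣))). -/
/-!
Put `x = 1 / (2𝐢)`. Since `1 / ((2k)² 𝐢² - 1) = x² / (k² - x²)`, the Mittag-Leffler expansion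
`π cot πx = 1/x + ∑ₖ (1/(x - k) + 1/(x + k))` gives `∑ₖ 1 / ((2k)² 𝐢² - 1) = (1 - πx cot πx) / 2`,
and likewise for `𝐣`. The summand of the theorem is a combination of these two by partial fractions
in `(2k)²`.
-/

open Real

theorem Real.hasSum_cotTerm {x : ℝ} (hx : ∀ n : ℤ, (n : ℝ) ≠ x) :
    HasSum (fun n : ℕ => 1 / (x - (n + 1)) + 1 / (x + (n + 1))) (π * cot (π * x) - 1 / x) := by
  have hxℂ : (x : ℂ) ∈ Complex.integerComplement := by
    rintro ⟨n, hn⟩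
    exact hx n (by exact_mod_cast hn)
  have h := (summable_cotTerm hxℂ).hasSum
  rw [← cot_series_rep' hxℂ] at h
  refine Complex.hasSum_ofReal.mp ?_
  push_cast [Complex.ofReal_cot]
  exact h

theorem intCast_ne_of_pos_of_lt_one {x : ℝ} (h0 : 0 < x) (h1 : x < 1) (n : ℤ) : (n : ℝ) ≠ x := by
  rintro rfl
  have : (0 : ℤ) < n := by exact_mod_cast h0
  have : n < 1 := by exact_mod_cast h1
  omega

theorem hasSum_sq_div_succ_sq_sub_sq {x : ℝ} (hx : ∀ n : ℤ, (n : ℝ) ≠ x) :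
    HasSum (fun n : ℕ => x ^ 2 / ((n + 1) ^ 2 - x ^ 2)) ((1 - π * x * cot (π * x)) / 2) := by
  have hx0 : x ≠ 0 := by simpa using (hx 0).symm
  have hterm (n : ℕ) : x ^ 2 / ((n + 1) ^ 2 - x ^ 2) =
      -(x / 2) * (1 / (x - (n + 1)) + 1 / (x + (n + 1))) := by
    have hsub : x - (n + 1) ≠ 0 := by simpa [sub_eq_zero] using (hx (n + 1)).symm
    have hadd : x + (n + 1) ≠ 0 := by
      simpa [add_eq_zero_iff_eq_neg] using (hx (-(n + 1))).symm
    rw [show ((n : ℝ) + 1) ^ 2 - x ^ 2 = -((x - (n + 1)) * (x + (n + 1))) by ring]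
    field_simp
    ring
  have hsum : (1 - π * x * cot (π * x)) / 2 = -(x / 2) * (π * cot (π * x) - 1 / x) := by
    field_simp
    ring
  simpa only [hterm, hsum] using (Real.hasSum_cotTerm hx).mul_left (-(x / 2))

theorem hasSum_one_div_even_sq_mul_sq_sub_one {a : ℝ} (ha : 1 / 2 < a) :
    HasSum (fun m : ℕ => 1 / ((2 * (m + 1) : ℝ) ^ 2 * a ^ 2 - 1))
      ((1 - π / (2 * a) * cot (π / (2 * a))) / 2) := by
  have ha0 : 0 < a := by linarith
  have hx : ∀ n : ℤ, (n : ℝ) ≠ 1 / (2 * a) :=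
    intCast_ne_of_pos_of_lt_one (by positivity) (by rw [div_lt_one (by positivity)]; linarith)
  convert hasSum_sq_div_succ_sq_sub_sq hx using 1
  · ext m
    field_simp
  · rw [mul_one_div]

theorem four_div_mul_sub_one_eq {t a b : ℝ} (hab : a ^ 2 ≠ b ^ 2)
    (ha : t * a ^ 2 - 1 ≠ 0) (hb : t * b ^ 2 - 1 ≠ 0) :
    4 / ((t * a ^ 2 - 1) * (t * b ^ 2 - 1)) =
      4 / (a ^ 2 - b ^ 2) * (b ^ 2 * (1 / (t * b ^ 2 - 1)) - a ^ 2 * (1 / (t * a ^ 2 - 1))) := by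
  have hab' : a ^ 2 - b ^ 2 ≠ 0 := sub_ne_zero.mpr hab
  field_simp
  ring

theorem hasSum_four_div_even_sq_mul_sq_sub_one_mul {a b : ℝ} (ha : 1 / 2 < a) (hb : 1 / 2 < b)
    (hab : a ≠ b) :
    HasSum (fun m : ℕ =>
        4 / (((2 * (m + 1) : ℝ) ^ 2 * a ^ 2 - 1) * ((2 * (m + 1) : ℝ) ^ 2 * b ^ 2 - 1)))
      (4 / (a ^ 2 - b ^ 2) * (b ^ 2 * ((1 - π / (2 * b) * cot (π / (2 * b))) / 2)
        - a ^ 2 * ((1 - π / (2 * a) * cot (π / (2 * a))) / 2))) := by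
  have hden {c : ℝ} (hc : 1 / 2 < c) (m : ℕ) : (2 * (m + 1) : ℝ) ^ 2 * c ^ 2 - 1 ≠ 0 := by
    have hm : (1 : ℝ) ≤ m + 1 := by simp
    have : 1 < 2 * (m + 1) * c := by nlinarith
    nlinarith
  have hsq : a ^ 2 ≠ b ^ 2 := by
    rwa [Ne, sq_eq_sq₀ (by linarith) (by linarith)]
  simp only [four_div_mul_sub_one_eq hsq (hden ha _) (hden hb _)]
  exact (((hasSum_one_div_even_sq_mul_sq_sub_one hb).mul_left _).sub
    ((hasSum_one_div_even_sq_mul_sq_sub_one ha).mul_left _)).mul_left _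

theorem series_eq_cot_form (i j : ℕ) (hi : 0 < i) (hj : 0 < j) (hij : i ≠ j) :
    (4 / Real.pi ^ 2) *
      (2 + ∑' m : ℕ,
        4 / (((2 * (m + 1) : ℝ) ^ 2 * ((i / Nat.gcd i j : ℕ) : ℝ) ^ 2 - 1) *
             ((2 * (m + 1) : ℝ) ^ 2 * ((j / Nat.gcd i j : ℕ) : ℝ) ^ 2 - 1)))
    = (8 / Real.pi ^ 2) *
      (((i / Nat.gcd i j : ℕ) : ℝ) ^ 2 /
          (((i / Nat.gcd i j : ℕ) : ℝ) ^ 2 - ((j / Nat.gcd i j : ℕ) : ℝ) ^ 2) *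
        (Real.pi / (2 * ((i / Nat.gcd i j : ℕ) : ℝ))) *
          Real.cot (Real.pi / (2 * ((i / Nat.gcd i j : ℕ) : ℝ)))
      - ((j / Nat.gcd i j : ℕ) : ℝ) ^ 2 /
          (((i / Nat.gcd i j : ℕ) : ℝ) ^ 2 - ((j / Nat.gcd i j : ℕ) : ℝ) ^ 2) *
        (Real.pi / (2 * ((j / Nat.gcd i j : ℕ) : ℝ))) *
          Real.cot (Real.pi / (2 * ((j / Nat.gcd i j : ℕ) : ℝ)))) := by
  have hdvd_i := Nat.gcd_dvd_left i j
  have hdvd_j := Nat.gcd_dvd_right i j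
  have hg : 0 < Nat.gcd i j := Nat.gcd_pos_of_pos_left j hi
  have ha : (1 : ℝ) ≤ (i / Nat.gcd i j : ℕ) :=
    Nat.one_le_cast.mpr (Nat.div_pos (Nat.le_of_dvd hi hdvd_i) hg)
  have hb : (1 : ℝ) ≤ (j / Nat.gcd i j : ℕ) :=
    Nat.one_le_cast.mpr (Nat.div_pos (Nat.le_of_dvd hj hdvd_j) hg)
  have hab : ((i / Nat.gcd i j : ℕ) : ℝ) ≠ (j / Nat.gcd i j : ℕ) := by
    rwa [Ne, Nat.cast_inj, Nat.div_left_inj hdvd_i hdvd_j]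
  set a : ℝ := ((i / Nat.gcd i j : ℕ) : ℝ)
  set b : ℝ := ((j / Nat.gcd i j : ℕ) : ℝ)
  rw [(hasSum_four_div_even_sq_mul_sq_sub_one_mul (by linarith) (by linarith) hab).tsum_eq]
  have hsq : a ^ 2 - b ^ 2 ≠ 0 := by
    rw [sub_ne_zero, Ne, sq_eq_sq₀ (by linarith) (by linarith)]; exact hab
  field_simp
  ring
end

section
/- Define √p_max^→(i,j) = (4/π²)·(2 + Σ_{m=2,4,...} 4/((m²𝐢²-1)(m²𝐣²-1))) with 𝐢 = i/gcd(i,j), 𝐣 = j/gcd(i,j). Then for all distinct positive integers i, j, we have √p_max^→(i,j) < 1. -/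
/-!
Dividing by the gcd keeps the indices distinct, say `I < J`. With `k = m + 1`, the `m`-th term is
nonpositive if `I = 0`; otherwise `J ≥ 2`, so the two denominator factors are at least `3 k²` and
`12 k²` and the term is at most `1 / (9 k²)`. By Basel the series is then at most `π² / 54`, and
`(4 / π²) (2 + π² / 54) = 8 / π² + 2 / 27 < 1` because `π² > 9`.
-/

open Real

noncomputable def sqrtPmaxSemi (i j : ℕ) : ℝ :=
  (4 / Real.pi ^ 2) *
    (2 + ∑' m : ℕ,
      4 / (((2 * (m + 1) : ℝ) ^ 2 * ((i / Nat.gcd i j : ℕ) : ℝ) ^ 2 - 1) *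
           ((2 * (m + 1) : ℝ) ^ 2 * ((j / Nat.gcd i j : ℕ) : ℝ) ^ 2 - 1)))

theorem Nat.div_gcd_ne_div_gcd {i j : ℕ} (h : i ≠ j) : i / i.gcd j ≠ j / i.gcd j := by
  intro h'
  apply h
  calc i = i / i.gcd j * i.gcd j := (Nat.div_mul_cancel (Nat.gcd_dvd_left i j)).symm
    _ = j / i.gcd j * i.gcd j := by rw [h']
    _ = j := Nat.div_mul_cancel (Nat.gcd_dvd_right i j)

theorem hasSum_one_div_nat_add_one_sq :
    HasSum (fun m : ℕ => (1 : ℝ) / ((m : ℝ) + 1) ^ 2) (π ^ 2 / 6) := by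
  simpa using (hasSum_nat_add_iff' 1).mpr hasSum_zeta_two

theorem tsum_le_of_le_of_hasSum {f g : ℕ → ℝ} {a : ℝ} (hfg : ∀ n, f n ≤ g n) (hg0 : ∀ n, 0 ≤ g n)
    (hg : HasSum g a) : ∑' n, f n ≤ a := by
  by_cases hf : Summable f
  · exact hg.tsum_eq ▸ hf.tsum_le_tsum hfg hg.summable
  · rw [tsum_eq_zero_of_not_summable hf]
    exact hg.nonneg hg0

theorem four_div_mul_sub_one_le {k : ℝ} (hk : 1 ≤ k) {I J : ℕ} (hIJ : I ≠ J) :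
    4 / (((2 * k) ^ 2 * (I : ℝ) ^ 2 - 1) * ((2 * k) ^ 2 * (J : ℝ) ^ 2 - 1)) ≤ 1 / 9 * (1 / k ^ 2) := by
  wlog hlt : I < J generalizing I J
  · rw [mul_comm]
    exact this hIJ.symm (by omega)
  have hk2 : 1 ≤ k ^ 2 := one_le_pow₀ hk
  rcases Nat.eq_zero_or_pos I with rfl | hI
  · have hJ : (1 : ℝ) ≤ (J : ℝ) ^ 2 := one_le_pow₀ (by exact_mod_cast hlt)
    refine le_trans (div_nonpos_of_nonneg_of_nonpos (by norm_num) ?_) (by positivity)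
    push_cast
    nlinarith
  · have hI : (1 : ℝ) ≤ (I : ℝ) ^ 2 := one_le_pow₀ (by exact_mod_cast hI)
    have hJ : (4 : ℝ) ≤ (J : ℝ) ^ 2 := by
      have : (2 : ℝ) ≤ J := by exact_mod_cast (by omega : 2 ≤ J)
      nlinarith
    have hIfactor : 3 * k ^ 2 ≤ (2 * k) ^ 2 * (I : ℝ) ^ 2 - 1 := by nlinarith
    have hJfactor : 3 * k ^ 2 * 4 ≤ (2 * k) ^ 2 * (J : ℝ) ^ 2 - 1 := by nlinarith
    calc 4 / (((2 * k) ^ 2 * (I : ℝ) ^ 2 - 1) * ((2 * k) ^ 2 * (J : ℝ) ^ 2 - 1))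
        ≤ 4 / (3 * k ^ 2 * (3 * k ^ 2 * 4)) :=
          div_le_div_of_nonneg_left (by norm_num) (by positivity)
            (mul_le_mul hIfactor hJfactor (by positivity) (by linarith))
      _ ≤ 4 / (36 * k ^ 2) :=
          div_le_div_of_nonneg_left (by norm_num) (by positivity) (by nlinarith)
      _ = 1 / 9 * (1 / k ^ 2) := by field_simp; norm_num

theorem sqrtPmaxSemi_lt_one_general (i j : ℕ) (hij : i ≠ j) :
    sqrtPmaxSemi i j < 1 := by
  have hsum := tsum_le_of_le_of_hasSum
    (fun m => four_div_mul_sub_one_le (le_add_of_nonneg_left m.cast_nonneg)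
      (Nat.div_gcd_ne_div_gcd hij))
    (fun m => by positivity) (hasSum_one_div_nat_add_one_sq.mul_left (1 / 9))
  have hpi : 9 < π ^ 2 := by nlinarith [pi_gt_three]
  rw [sqrtPmaxSemi, div_mul_eq_mul_div, div_lt_one (by positivity)]
  nlinarith

theorem sqrtPmaxSemi_lt_one (i j : ℕ) (hi : 0 < i) (hj : 0 < j) (hij : i ≠ j) :
    sqrtPmaxSemi i j < 1 :=
  sqrtPmaxSemi_lt_one_general i j hij
end

section
/- Let H be a Hermitian N×N matrix, p_max(i,j) = (Σ_k |⟨e_i,v_k⟩⟨v_k,e_j⟩|)² as in the ITC definition, and p_t(i,j) = |⟨e_i, e^{-itH}e_j⟩|². Then for any n ≥ 2 and any i, j, √p_max(i,j) ≤ Σ_{k_1,...,k_{n-2}=1}^N ∏_{l=1}^{n-1} √p_max(k_{l-1}, k_l), where k_0 = i and k_{n-1} = j. -/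
/-!
With `w k x = ‖v k x‖`, the matrix `A = (√pmax a b)` is the Gram matrix `wᵀ * w` of unit vectors
with nonnegative entries. Then `w * wᵀ ≥ 1` entrywise, so inserting the resolution of the identity
and dropping the off-diagonal terms gives `A ≤ A * A` entrywise. As `A ≥ 0`, iterating yields
`A ≤ A ^ (n - 1)`, and `(A ^ (n - 1)) i j` is the sum over paths from `i` to `j` of the products of
the entries of `A` along the path.
-/

open Finset

namespace Matrix
variable {ι : Type*} [Fintype ι]

theorem pow_apply_eq_sum_paths {α : Type*} [CommSemiring α] [DecidableEq ι] (A : Matrix ι ι α) (m : ℕ) (i j : ι) :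
    (A ^ m) i j = ∑ p ∈ univ.filter (fun p : Fin (m + 1) → ι => p 0 = i ∧ p (Fin.last m) = j),
      ∏ l : Fin m, A (p l.castSucc) (p l.succ) := by
  induction m generalizing i with
  | zero =>
    rw [pow_zero, one_apply, sum_filter,
      ← (Equiv.funUnique (Fin 1) ι).symm.sum_comp]
    simp [ite_and]
  | succ m ih =>
    rw [pow_succ', mul_apply, sum_filter, ← (Fin.consEquiv fun _ => ι).sum_comp,
      Fintype.sum_prod_type]
    simp only [ih, mul_sum, sum_filter, Fin.consEquiv_apply, Fin.cons_zero, Fin.prod_univ_succ,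
      ← Fin.succ_last, Fin.cons_succ, ← Fin.succ_castSucc, Fin.castSucc_zero]
    rw [sum_comm]
    simp [ite_and]

theorem sum_paths_range_eq_pow_apply {α : Type*} [CommSemiring α] [DecidableEq ι]
    (A : Matrix ι ι α) {n : ℕ} (hn : 0 < n) (i j : ι) :
    ∑ k ∈ univ.filter (fun k : Fin n → ι => k ⟨0, hn⟩ = i ∧ k ⟨n - 1, by omega⟩ = j),
      ∏ l ∈ (range (n - 1)).attach,
        A (k ⟨l.1, by have := mem_range.mp l.2; omega⟩)
          (k ⟨l.1 + 1, by have := mem_range.mp l.2; omega⟩) = (A ^ (n - 1)) i j := by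
  obtain ⟨m, rfl⟩ : ∃ m, n = m + 1 := ⟨n - 1, by omega⟩
  rw [pow_apply_eq_sum_paths]
  refine sum_congr rfl fun k _ => ?_
  exact prod_bij (fun l _ => ⟨l.1, mem_range.mp l.2⟩) (fun _ _ => mem_univ _)
    (fun _ _ _ _ h => Subtype.ext (congrArg Fin.val h))
    (fun l _ => ⟨⟨l.1, mem_range.mpr l.2⟩, mem_attach _ _, rfl⟩) (fun _ _ => rfl)

theorem apply_le_pow_apply_of_le_mul_self {α : Type*} [Semiring α] [PartialOrder α]
    [IsOrderedRing α] [DecidableEq ι] {A : Matrix ι ι α} (hA : ∀ a b, 0 ≤ A a b)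
    (hAA : ∀ a b, A a b ≤ (A * A) a b) {m : ℕ} (hm : m ≠ 0) (i j : ι) :
    A i j ≤ (A ^ m) i j := by
  induction m generalizing i with
  | zero => exact absurd rfl hm
  | succ m ih =>
    rcases eq_or_ne m 0 with rfl | hm
    · rw [pow_one]
    calc A i j ≤ (A * A) i j := hAA i j
      _ ≤ (A * A ^ m) i j := sum_le_sum fun c _ => mul_le_mul_of_nonneg_left (ih hm c) (hA i c)
      _ = (A ^ (m + 1)) i j := by rw [pow_succ']

theorem transpose_mul_self_apply_le_mul_self_apply {κ : Type*} [Fintype κ]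
    (w : Matrix κ ι ℝ) (hw : ∀ k x, 0 ≤ w k x) (hnorm : ∀ k, ∑ x, w k x ^ 2 = 1) (a b : ι) :
    (wᵀ * w) a b ≤ (wᵀ * w * (wᵀ * w)) a b := by
  simp only [mul_apply, transpose_apply]
  calc ∑ k, w k a * w k b = ∑ k, ∑ c, w k a * w k c * (w k c * w k b) := by
        refine sum_congr rfl fun k _ => ?_
        rw [← mul_one (w k a * w k b), ← hnorm k, mul_sum]
        exact sum_congr rfl fun c _ => by ring
    _ = ∑ c, ∑ k, w k a * w k c * (w k c * w k b) := sum_comm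
    _ ≤ ∑ c, (∑ k, w k a * w k c) * ∑ k', w k' c * w k' b := by
        refine sum_le_sum fun c _ => ?_
        rw [sum_mul]
        refine sum_le_sum fun k _ => mul_le_mul_of_nonneg_left ?_ (mul_nonneg (hw k a) (hw k c))
        exact single_le_sum (f := fun k' => w k' c * w k' b)
          (fun k' _ => mul_nonneg (hw k' c) (hw k' b)) (mem_univ k)

end Matrix

open Matrix in
theorem pmax_path_integral {N : ℕ} (v : Fin N → Fin N → ℂ)
    (horth : ∀ k l : Fin N,
      ∑ x : Fin N, star (v k x) * v l x = if k = l then 1 else 0)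
    (pmax : Fin N → Fin N → ℝ)
    (hpmax : ∀ i j, pmax i j = (∑ k : Fin N, ‖v k i * star (v k j)‖) ^ 2)
    (n : ℕ) (hn : 2 ≤ n) (i j : Fin N) :
    Real.sqrt (pmax i j) ≤
      ∑ k ∈ Finset.univ.filter
          (fun k : Fin n → Fin N => k ⟨0, by omega⟩ = i ∧ k ⟨n - 1, by omega⟩ = j),
        ∏ l ∈ (Finset.range (n - 1)).attach,
          Real.sqrt (pmax
            (k ⟨l.1, by have := Finset.mem_range.mp l.2; omega⟩)
            (k ⟨l.1 + 1, by have := Finset.mem_range.mp l.2; omega⟩)) := by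
  have hnorm : ∀ k, ∑ x, ‖v k x‖ ^ 2 = 1 := fun k => by
    have h := horth k k
    rw [if_pos rfl] at h
    simp only [Complex.star_def, Complex.conj_mul'] at h
    exact_mod_cast h
  let A : Matrix (Fin N) (Fin N) ℝ := of fun a b => √(pmax a b)
  let w : Matrix (Fin N) (Fin N) ℝ := of fun k x => ‖v k x‖
  have hA : A = wᵀ * w := by
    ext a b
    simp only [A, w, hpmax, of_apply, mul_apply, transpose_apply, norm_mul, norm_star]
    exact Real.sqrt_sq (by positivity)
  have hAA : ∀ a b, A a b ≤ (A * A) a b := by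
    rw [hA]
    exact transpose_mul_self_apply_le_mul_self_apply w (fun k x => norm_nonneg (v k x)) hnorm
  calc √(pmax i j) = A i j := rfl
    _ ≤ (A ^ (n - 1)) i j :=
      apply_le_pow_apply_of_le_mul_self (fun _ _ => Real.sqrt_nonneg _) hAA (by omega) i j
    _ = _ := (sum_paths_range_eq_pow_apply A (by omega) i j).symm
end
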